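/- Let 0 < ε ≤ 1 and let a, b, c be integers with a > 0, D = b² − 4ac < 0, such that 0 ≤ b/(2a) ≤ ε/2 and 1 ≤ √|D|/(2a) ≤ 1 + ε/2. Then |a| ≤ (1/2)√|D|, |b| ≤ (1/2)√|D|, and |c| ≤ (1/2)(1 + ε)√|D|; in particular max(|a|,|b|,|c|) ≤ (1/2)(1 + ε)√|D|. -/
import Mathlib


/-- Let `0 < ε ≤ 1` and `a, b, c ∈ ℤ` with `a > 0`, `D = b² − 4ac < 0`,
`0 ≤ b/(2a) ≤ ε/2` and `1 ≤ √|D|/(2a) ≤ 1 + ε/2`. Then `|a| ≤ (1/2)√|D|`,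
`|b| ≤ (1/2)√|D|` and `|c| ≤ (1/2)(1+ε)√|D|`; in particular
`max(|a|,|b|,|c|) ≤ (1/2)(1+ε)√|D|`. -/
theorem imaginary_quadratic_fundamental_domain_bounds
    (ε : ℝ) (hε0 : 0 < ε) (hε1 : ε ≤ 1)
    (a b c : ℤ) (ha : 0 < a)
    (hD : b ^ 2 - 4 * a * c < 0)
    (hb0 : 0 ≤ (b : ℝ) / (2 * a)) (hb1 : (b : ℝ) / (2 * a) ≤ ε / 2)
    (hy0 : 1 ≤ Real.sqrt |((b : ℝ) ^ 2 - 4 * a * c)| / (2 * a))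
    (hy1 : Real.sqrt |((b : ℝ) ^ 2 - 4 * a * c)| / (2 * a) ≤ 1 + ε / 2) :
    (|(a : ℝ)| ≤ (1 / 2) * Real.sqrt |((b : ℝ) ^ 2 - 4 * a * c)|) ∧
    (|(b : ℝ)| ≤ (1 / 2) * Real.sqrt |((b : ℝ) ^ 2 - 4 * a * c)|) ∧
    (|(c : ℝ)| ≤ (1 / 2) * (1 + ε) * Real.sqrt |((b : ℝ) ^ 2 - 4 * a * c)|) ∧
    max |(a : ℝ)| (max |(b : ℝ)| |(c : ℝ)|) ≤
      (1 / 2) * (1 + ε) * Real.sqrt |((b : ℝ) ^ 2 - 4 * a * c)| := by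
  set s := Real.sqrt |((b : ℝ) ^ 2 - 4 * a * c)| with hs
  have haR : (0 : ℝ) < (a : ℝ) := by exact_mod_cast ha
  have hDR : ((b : ℝ) ^ 2 - 4 * a * c) < 0 := by exact_mod_cast hD
  have habs : |((b : ℝ) ^ 2 - 4 * a * c)| = 4 * (a:ℝ) * c - (b:ℝ) ^ 2 := by
    rw [abs_of_neg hDR]; ring
  have hs0 : 0 ≤ s := Real.sqrt_nonneg _
  have hs2 : s ^ 2 = 4 * a * c - (b : ℝ) ^ 2 := by
    rw [hs, Real.sq_sqrt (abs_nonneg _), habs]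
  have h2a : (0 : ℝ) < 2 * a := by linarith
  have hbge : (0 : ℝ) ≤ (b : ℝ) := by
    have := (le_div_iff₀ h2a).mp hb0
    linarith
  have hble : (b : ℝ) ≤ ε * a := by
    have := (div_le_iff₀ h2a).mp hb1
    linarith
  have hsge : 2 * (a : ℝ) ≤ s := by
    have := (le_div_iff₀ h2a).mp hy0
    linarith
  have hsle : s ≤ (2 + ε) * a := by
    have := (div_le_iff₀ h2a).mp hy1
    nlinarith
  have hcpos : (0 : ℝ) < (c : ℝ) := by nlinarith
  have h1 : |(a : ℝ)| ≤ (1 / 2) * s := by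
    rw [abs_of_pos haR]; linarith
  have h2 : |(b : ℝ)| ≤ (1 / 2) * s := by
    rw [abs_of_nonneg hbge]; nlinarith
  have h3 : |(c : ℝ)| ≤ (1 / 2) * (1 + ε) * s := by
    rw [abs_of_pos hcpos]
    have hbhalf : (b:ℝ) ≤ (1/2) * s := by nlinarith
    have e1 : s * s ≤ ((2+ε) * a) * s := mul_le_mul_of_nonneg_right hsle hs0
    have e2 : (b:ℝ) * b ≤ (ε * a) * ((1/2) * s) :=
      mul_le_mul hble hbhalf hbge (by positivity)
    nlinarith [mul_pos haR hε0, mul_nonneg (mul_nonneg hε0.le haR.le) hs0]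
  have hs' : (1/2) * s ≤ (1/2) * (1 + ε) * s := by nlinarith
  exact ⟨h1, h2, h3, max_le (h1.trans hs') (max_le (h2.trans hs') h3)⟩
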